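/- If there is a nonzero morphism χ: 𝕀^R → 𝕀^S between rectangle modules over ℝ^n, then R ∩ S is nonempty; moreover min_I < max_J as decorated points (writing I = R, J = S). -/

import Mathlib

/-!
A nonzero natural transformation has a nonzero component at some point `p`, and a morphism
of interval modules can only be nonzero at points of both supports, so `p ∈ R ∩ S`.
Coordinatewise `inf Rᵢ ≤ pᵢ ≤ sup Sᵢ`; if these are equal, both endpoints equal `pᵢ` and are
attained, so they carry the decorations `−` and `+`, and still `min_R < max_S`.
-/

open CategoryTheory Classical

noncomputable section

/-- Convexity of a subset of a poset. -/
def IsConvex {P : Type} [Preorder P] (I : Set P) : Prop :=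
  ∀ ⦃p q r : P⦄, p ∈ I → q ∈ I → p ≤ r → r ≤ q → r ∈ I

/-- Zigzag connectivity within a subset. -/
def ZigzagConnected {P : Type} [Preorder P] (I : Set P) : Prop :=
  ∀ p ∈ I, ∀ q ∈ I,
    Relation.ReflTransGen (fun a b => a ∈ I ∧ b ∈ I ∧ (a ≤ b ∨ b ≤ a)) p q

/-- An interval in a poset: nonempty, convex, and zigzag connected. -/
def IsIntervalSet {P : Type} [Preorder P] (I : Set P) : Prop :=
  I.Nonempty ∧ IsConvex I ∧ ZigzagConnected I

open scoped Classical in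
/-- The pointwise vector space of the interval module: `k` (as `⊤`) on `I`, `0` off `I`. -/
def objSub (k : Type) [Field k] {P : Type} [Preorder P] (I : Set P) (p : P) : Submodule k k :=
  if p ∈ I then ⊤ else ⊥

open scoped Classical in
/-- The interval persistence module `𝕀^I` as a functor `P ⥤ ModuleCat k`. -/
def intervalModule (k : Type) [Field k] {P : Type} [Preorder P] (I : Set P)
    (hI : IsConvex I) : P ⥤ ModuleCat.{0} k where
  obj p := ModuleCat.of k (objSub k I p)
  map {p q} h :=
    if hpq : p ∈ I ∧ q ∈ I then
      ModuleCat.ofHom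
        { toFun := fun x => ⟨(x : k), by simp [objSub, hpq.2]⟩
          map_add' := by intros; rfl
          map_smul' := by intros; rfl }
    else 0
  map_id := by
    intro p
    try dsimp only
    by_cases hp : p ∈ I
    · rw [dif_pos ⟨hp, hp⟩]; rfl
    · rw [dif_neg (fun h => hp h.1)]
      haveI : Subsingleton ↥(objSub k I p) := by
        rw [objSub, if_neg hp]; infer_instance
      apply ModuleCat.hom_ext; apply LinearMap.ext; intro x
      exact this.allEq _ _
  map_comp := by
    intro p q r hpq hqr
    try dsimp only
    by_cases hpr : p ∈ I ∧ r ∈ I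
    · have hq : q ∈ I := hI hpr.1 hpr.2 (leOfHom hpq) (leOfHom hqr)
      rw [dif_pos hpr, dif_pos ⟨hpr.1, hq⟩, dif_pos ⟨hq, hpr.2⟩]
      rfl
    · rw [dif_neg hpr]
      by_cases hp : p ∈ I
      · have hr : r ∉ I := fun hr => hpr ⟨hp, hr⟩
        haveI : Subsingleton ↥(objSub k I r) := by
          rw [objSub, if_neg hr]; infer_instance
        apply ModuleCat.hom_ext; apply LinearMap.ext; intro x
        exact this.allEq _ _
      · haveI : Subsingleton ↥(objSub k I p) := by
          rw [objSub, if_neg hp]; infer_instance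
        apply ModuleCat.hom_ext; apply LinearMap.ext; intro x
        have hx : x = 0 := this.allEq x 0
        rw [hx]
        simp

open DirectSum

open scoped ENNReal

/-- Direct sum of a family of persistence modules. -/
def dsumF (k : Type) [Field k] {P : Type} [Preorder P] {ι : Type}
    (F : ι → P ⥤ ModuleCat.{0} k) : P ⥤ ModuleCat.{0} k where
  obj p := ModuleCat.of k (⨁ i, ((F i).obj p : Type))
  map {p q} h := ModuleCat.ofHom
    (DFinsupp.mapRange.linearMap (fun i => ((F i).map h).hom))
  map_id := by
    intro p
    try dsimp only
    simp only [CategoryTheory.Functor.map_id, ModuleCat.hom_id]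
    apply ModuleCat.hom_ext
    exact DFinsupp.mapRange.linearMap_id
  map_comp := by
    intro p q r hpq hqr
    try dsimp only
    simp only [CategoryTheory.Functor.map_comp]
    apply ModuleCat.hom_ext; apply LinearMap.ext; intro x
    apply DFinsupp.ext; intro i
    rfl

/-- Use the preorder category structure on `Fin n → ℝ`. -/
instance RnCat (n : ℕ) : Category (Fin n → ℝ) := Preorder.smallCategory _

/-- Diagonal translation by `ε` as an endofunctor of the poset `Fin n → ℝ`. -/
def transl (n : ℕ) (ε : ℝ) : (Fin n → ℝ) ⥤ (Fin n → ℝ) :=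
  Monotone.functor (f := fun p i => p i + ε)
    (fun _ _ hab i => add_le_add (hab i) le_rfl)

/-- `M` and `N` are `ε`-interleaved `ℝⁿ`-persistence modules. -/
def Interleaved (k : Type) [Field k] {n : ℕ} (ε : ℝ)
    (M N : (Fin n → ℝ) ⥤ ModuleCat.{0} k) : Prop :=
  ∃ _hε : 0 ≤ ε, ∃ (f : M ⟶ transl n ε ⋙ N) (g : N ⟶ transl n ε ⋙ M),
    (∀ p : Fin n → ℝ, f.app p ≫ g.app (fun i => p i + ε) =
      M.map (homOfLE (show p ≤ fun i => p i + ε + ε from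
        fun i => by show p i ≤ p i + ε + ε; linarith))) ∧
    (∀ p : Fin n → ℝ, g.app p ≫ f.app (fun i => p i + ε) =
      N.map (homOfLE (show p ≤ fun i => p i + ε + ε from
        fun i => by show p i ≤ p i + ε + ε; linarith)))

/-- An interval `I ⊆ ℝⁿ` is `δ`-trivial: it contains no pair `p ≤ p + δ`. -/
def SetTrivial {n : ℕ} (δ : ℝ) (I : Set (Fin n → ℝ)) : Prop :=
  ¬ ∃ p, p ∈ I ∧ (fun i => p i + δ) ∈ I

/-- Barcode data: an indexed family of nonempty convex intervals in `ℝⁿ`. -/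
structure Barcode (n : ℕ) where
  ι : Type
  I : ι → Set (Fin n → ℝ)
  nonempty : ∀ i, (I i).Nonempty
  conv : ∀ i, IsConvex (I i)

/-- The interval decomposable module associated to barcode data. -/
def Barcode.module (k : Type) [Field k] {n : ℕ} (B : Barcode n) :
    (Fin n → ℝ) ⥤ ModuleCat.{0} k :=
  dsumF k fun i => intervalModule k (B.I i) (B.conv i)

/-- `B` is pointwise finite dimensional. -/
def Barcode.pfd (k : Type) [Field k] {n : ℕ} (B : Barcode n) : Prop :=
  ∀ p : Fin n → ℝ, Module.Finite k ((B.module k).obj p)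

/-- An `ε`-matching between two barcodes: a partial bijection such that unmatched
intervals are `2ε`-trivial and matched intervals are `ε`-interleaved. -/
def Matched (k : Type) [Field k] {n : ℕ} (ε : ℝ) (B C : Barcode n) : Prop :=
  0 ≤ ε ∧ ∃ (A : Set B.ι) (A' : Set C.ι) (e : A ≃ A'),
    (∀ i ∉ A, SetTrivial (2 * ε) (B.I i)) ∧
    (∀ j ∉ A', SetTrivial (2 * ε) (C.I j)) ∧
    (∀ i : A, Interleaved k ε
      (intervalModule k (B.I i) (B.conv i))
      (intervalModule k (C.I (e i)) (C.conv (e i))))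

/-- The interleaving distance, valued in `ℝ≥0∞`. -/
def dInt (k : Type) [Field k] {n : ℕ} (M N : (Fin n → ℝ) ⥤ ModuleCat.{0} k) : ℝ≥0∞ :=
  ⨅ (ε : ℝ) (_ : Interleaved k ε M N), ENNReal.ofReal ε

/-- The bottleneck distance between barcodes, valued in `ℝ≥0∞`. -/
def dBot (k : Type) [Field k] {n : ℕ} (B C : Barcode n) : ℝ≥0∞ :=
  ⨅ (ε : ℝ) (_ : Matched k ε B C), ENNReal.ofReal ε

/-- Rectangles: products of real intervals. -/
def rectSet {n : ℕ} (R : Fin n → Set ℝ) : Set (Fin n → ℝ) := {x | ∀ i, x i ∈ R i}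

theorem rectSet_convex {n : ℕ} (R : Fin n → Set ℝ) (h : ∀ i, (R i).OrdConnected) :
    IsConvex (rectSet R) := by
  intro p q r hp hq hpr hrq i
  exact (h i).out (hp i) (hq i) ⟨hpr i, hrq i⟩

/-- A barcode consists of rectangles. -/
def IsRectBarcode {n : ℕ} (B : Barcode n) : Prop :=
  ∀ i, ∃ R : Fin n → Set ℝ,
    (∀ j, (R j).Nonempty ∧ (R j).OrdConnected) ∧ B.I i = rectSet R

/-- Decorated numbers: an extended real endpoint with a decoration,
`false` = `−` (closed side), `true` = `+` (open side), ordered lexicographically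
so that `a⁻ < a⁺` and `a^* < b^*` whenever `a < b`. -/
def DecNum := Lex (EReal × Bool)

noncomputable instance : LinearOrder DecNum :=
  inferInstanceAs (LinearOrder (Lex (EReal × Bool)))

open scoped Classical in
/-- The decorated lower endpoint of a subset of `ℝ`. -/
noncomputable def lowDec (I : Set ℝ) : DecNum :=
  toLex (sInf ((↑) '' I : Set EReal),
    if sInf ((↑) '' I : Set EReal) ∈ ((↑) '' I : Set EReal) then false else true)

open scoped Classical in
/-- The decorated upper endpoint of a subset of `ℝ`. -/
noncomputable def highDec (I : Set ℝ) : DecNum :=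
  toLex (sSup ((↑) '' I : Set EReal),
    if sSup ((↑) '' I : Set EReal) ∈ ((↑) '' I : Set EReal) then true else false)

/-- The decorated point `min_R` of a rectangle with factors `R`. -/
noncomputable def minDec {n : ℕ} (R : Fin n → Set ℝ) : Fin n → DecNum :=
  fun i => lowDec (R i)

/-- The decorated point `max_R` of a rectangle with factors `R`. -/
noncomputable def maxDec {n : ℕ} (R : Fin n → Set ℝ) : Fin n → DecNum :=
  fun i => highDec (R i)

/-- `u` of a decorated number: the underlying real number, `0` for `±∞`. -/
noncomputable def uDec (d : DecNum) : ℝ := (ofLex d).1.toReal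

/-- `α` of a rectangle with factors `R`. -/
noncomputable def alphaR {n : ℕ} (R : Fin n → Set ℝ) : ℝ :=
  (∑ i, uDec (minDec R i)) + (∑ i, uDec (maxDec R i))

open scoped Classical in
/-- `P` of a rectangle: the number of endpoint decorations equal to `+`. -/
noncomputable def PR {n : ℕ} (R : Fin n → Set ℝ) : ℕ :=
  (Finset.univ.filter fun i => (ofLex (minDec R i)).2 = true).card +
    (Finset.univ.filter fun i => (ofLex (maxDec R i)).2 = true).card

/-- The preorder `≤_α` on rectangles. -/
noncomputable def leAlpha {n : ℕ} (R S : Fin n → Set ℝ) : Prop :=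
  alphaR R < alphaR S ∨ (alphaR R = alphaR S ∧ PR R ≤ PR S)

/-- Two rectangles are of the same type if all coordinatewise set differences
are bounded. -/
def SameType {n : ℕ} (R S : Fin n → Set ℝ) : Prop :=
  ∀ i, Bornology.IsBounded (R i \ S i) ∧ Bornology.IsBounded (S i \ R i)

/-- `I ⊆ ℝⁿ` is `δ`-significant. -/
def SetSignificant {n : ℕ} (δ : ℝ) (I : Set (Fin n → ℝ)) : Prop :=
  ∃ p, p ∈ I ∧ (fun i => p i + δ) ∈ I

/-- Rectangle factor data: each factor is a nonempty ordered-connected real interval. -/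
def IsRectFactors {n : ℕ} (R : Fin n → Set ℝ) : Prop :=
  ∀ i, (R i).Nonempty ∧ (R i).OrdConnected

theorem CategoryTheory.NatTrans.exists_app_ne_zero {C D : Type*} [Category C] [Category D]
    [Limits.HasZeroMorphisms D] {F G : C ⥤ D} {α : F ⟶ G} (hα : α ≠ 0) :
    ∃ X, α.app X ≠ 0 := by
  by_contra! h
  exact hα (NatTrans.ext (funext h))

theorem isZero_intervalModule_obj (k : Type) [Field k] {P : Type} [Preorder P] {I : Set P}
    (hI : IsConvex I) {p : P} (hp : p ∉ I) :
    Limits.IsZero ((intervalModule k I hI).obj p) := by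
  have : Subsingleton (objSub k I p) := by
    rw [objSub, if_neg hp]
    infer_instance
  exact ModuleCat.isZero_of_subsingleton (ModuleCat.of k (objSub k I p))

theorem mem_inter_of_app_ne_zero {k : Type} [Field k] {P : Type} [Preorder P] {I J : Set P}
    {hI : IsConvex I} {hJ : IsConvex J} {χ : intervalModule k I hI ⟶ intervalModule k J hJ}
    {p : P} (hp : χ.app p ≠ 0) : p ∈ I ∩ J := by
  constructor
  · by_contra hpI
    exact hp ((isZero_intervalModule_obj k hI hpI).eq_of_src _ _)
  · by_contra hpJ
    exact hp ((isZero_intervalModule_obj k hJ hpJ).eq_of_tgt _ _)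

theorem lowDec_lt_highDec_of_mem {A B : Set ℝ} {x : ℝ} (hA : x ∈ A) (hB : x ∈ B) :
    lowDec A < highDec B := by
  have hxA : (x : EReal) ∈ ((↑) '' A : Set EReal) := Set.mem_image_of_mem _ hA
  have hxB : (x : EReal) ∈ ((↑) '' B : Set EReal) := Set.mem_image_of_mem _ hB
  have hinf : sInf ((↑) '' A : Set EReal) ≤ x := sInf_le hxA
  have hsup : (x : EReal) ≤ sSup ((↑) '' B : Set EReal) := le_sSup hxB
  rcases (hinf.trans hsup).lt_or_eq with hlt | heq
  · exact Prod.Lex.left _ _ hlt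
  · have hinf_eq : sInf ((↑) '' A : Set EReal) = x := le_antisymm hinf (heq ▸ hsup)
    have hsup_eq : sSup ((↑) '' B : Set EReal) = x := le_antisymm (heq ▸ hinf) hsup
    rw [lowDec, highDec, hinf_eq, hsup_eq, if_pos hxA, if_pos hxB]
    exact Prod.Lex.right _ Bool.false_lt_true

/-- If there is a nonzero morphism `χ : 𝕀^R ⟶ 𝕀^S` between rectangle
modules over `ℝⁿ`, then `R ∩ S ≠ ∅`; moreover `min_R < max_S` as decorated points. -/
theorem nonzero_rect_morphism_inter_nonempty
    (k : Type) [Field k] {n : ℕ} (R S : Fin n → Set ℝ)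
    (hR : IsRectFactors R) (hS : IsRectFactors S)
    (χ : intervalModule k (rectSet R) (rectSet_convex R fun i => (hR i).2) ⟶
      intervalModule k (rectSet S) (rectSet_convex S fun i => (hS i).2))
    (hχ : χ ≠ 0) :
    (rectSet R ∩ rectSet S).Nonempty ∧ ∀ i, minDec R i < maxDec S i := by
  obtain ⟨p, hp⟩ := NatTrans.exists_app_ne_zero hχ
  obtain ⟨hpR, hpS⟩ := mem_inter_of_app_ne_zero hp
  exact ⟨⟨p, hpR, hpS⟩, fun i => lowDec_lt_highDec_of_mem (hpR i) (hpS i)⟩
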